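/- (Widest path is solved by the generalized Bellman–Ford algorithm with ⊕ = max, ⊗ = min.) For every natural number t and all vertices u, v : V, the (max, min) Bellman–Ford iterate equals the supremum over all walks of length at most t of the minimum edge capacity along the walk: W_t u v = ⨆_{k ∈ Finset.range (t+1)} ⨆ over all walks p of length k from u to v of ⨅_{i=0}^{k-1} w (p i) (p (i+1)) (the empty infimum for k = 0 is ∞, and the supremum over an empty set of walks is 0). -/

import Mathlib

open ENNReal

/-- The (max, min) generalized Bellman–Ford iterates for widest path:
`W 0 u v = if u = v then ∞ else 0` and
`W (t+1) u v = max (⨆ x, min (W t u x) (w x v)) (W 0 u v)`. -/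
noncomputable def maxMinBF {V : Type*} [Fintype V] [DecidableEq V]
    (w : Matrix V V ℝ≥0∞) : ℕ → V → V → ℝ≥0∞
  | 0 => fun u v => if u = v then ∞ else 0
  | t + 1 => fun u v =>
      max (⨆ x : V, min (maxMinBF w t u x) (w x v)) (if u = v then ∞ else 0)

/-!
A walk of length `k + 1` from `u` to `v` is a walk of length `k` from `u` to some `x` followed by
the edge `x → v`, and its width (smallest capacity) is the minimum of the two widths. Since `min`
distributes over suprema in `ℝ≥0∞` (a frame), the widest walk of length `k + 1` is obtained from
the widest walks of length `k` by one Bellman–Ford relaxation. Induction on `t` then shows that the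
relaxation part of `W_t` collects the walks of lengths `1, …, t`, and the `max` with `W_0`
contributes the walk of length `0`.
-/

theorem Fin.iInf_eq_iInf_castSucc_inf_last {α : Type*} [CompleteLattice α] {n : ℕ}
    (f : Fin (n + 1) → α) : ⨅ i, f i = (⨅ i : Fin n, f i.castSucc) ⊓ f (Fin.last n) :=
  le_antisymm (le_inf (le_iInf fun _ => iInf_le _ _) (iInf_le _ _))
    (le_iInf <| Fin.lastCases inf_le_right fun i => inf_le_left.trans (iInf_le _ i))

theorem Finset.iSup_range_succ' {α : Type*} [CompleteLattice α] (f : ℕ → α) (n : ℕ) :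
    ⨆ k ∈ Finset.range (n + 1), f k = f 0 ⊔ ⨆ k ∈ Finset.range n, f (k + 1) := by
  rw [Finset.range_add_one', Finset.iSup_insert, Finset.map_eq_image, Finset.iSup_finset_image]; rfl

section Walks

variable {V α : Type*}

def walkWidth [CompleteLattice α] (w : Matrix V V α) {k : ℕ} (p : Fin (k + 1) → V) : α :=
  ⨅ i : Fin k, w (p i.castSucc) (p i.succ)

def maxWalkWidth [CompleteLattice α] (w : Matrix V V α) (k : ℕ) (u v : V) : α :=
  ⨆ p : {p : Fin (k + 1) → V // p 0 = u ∧ p (Fin.last k) = v}, walkWidth w p.1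

theorem walkWidth_snoc [CompleteLattice α] (w : Matrix V V α) {k : ℕ} (p : Fin (k + 1) → V)
    (v : V) :
    walkWidth w (Fin.snoc p v : Fin (k + 2) → V) = walkWidth w p ⊓ w (p (Fin.last k)) v := by
  simp only [walkWidth, Fin.iInf_eq_iInf_castSucc_inf_last (n := k), Fin.succ_castSucc,
    Fin.snoc_castSucc, Fin.succ_last, Fin.snoc_last]

theorem maxWalkWidth_zero [CompleteLattice α] [DecidableEq V] (w : Matrix V V α) (u v : V) :
    maxWalkWidth w 0 u v = if u = v then ⊤ else ⊥ := by
  split_ifs with h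
  · subst h
    exact top_le_iff.mp <| le_iSup_of_le ⟨fun _ => u, rfl, rfl⟩ (by simp [walkWidth])
  · exact iSup_eq_bot.mpr fun ⟨p, hp0, hp1⟩ => absurd (hp0.symm.trans hp1) h

theorem maxWalkWidth_succ [Order.Frame α] (w : Matrix V V α) (k : ℕ) (u v : V) :
    maxWalkWidth w (k + 1) u v = ⨆ x, maxWalkWidth w k u x ⊓ w x v := by
  apply le_antisymm
  · refine iSup_le fun ⟨q, hq0, hqv⟩ => ?_
    subst hqv
    have hq := walkWidth_snoc w (Fin.init q) (q (Fin.last _))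
    rw [Fin.snoc_init_self] at hq
    refine le_iSup_of_le (Fin.init q (Fin.last k)) ?_
    rw [hq]
    exact inf_le_inf_right _ (le_iSup_of_le ⟨Fin.init q, hq0, rfl⟩ le_rfl)
  · refine iSup_le fun x => ?_
    rw [maxWalkWidth, iSup_inf_eq]
    refine iSup_le fun ⟨p, hp0, hpx⟩ => ?_
    subst hpx
    refine le_iSup_of_le ⟨Fin.snoc p v, ?_, Fin.snoc_last _ _⟩ (walkWidth_snoc w p v).ge
    exact (Fin.snoc_castSucc (α := fun _ => V) v p 0).trans hp0

end Walks

theorem maxMinBF_eq_sup_over_short_walks {V : Type*} [Fintype V] [DecidableEq V]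
    (w : Matrix V V ℝ≥0∞) (t : ℕ) (u v : V) :
    maxMinBF w t u v =
      ⨆ k ∈ Finset.range (t + 1),
        ⨆ p : {p : Fin (k + 1) → V // p 0 = u ∧ p (Fin.last k) = v},
          ⨅ i : Fin k, w (p.1 i.castSucc) (p.1 i.succ) := by
  change maxMinBF w t u v = ⨆ k ∈ Finset.range (t + 1), maxWalkWidth w k u v
  induction t generalizing v with
  | zero => simp [maxMinBF, maxWalkWidth_zero]
  | succ t ih =>
    calc maxMinBF w (t + 1) u v
        = (⨆ x, (⨆ k ∈ Finset.range (t + 1), maxWalkWidth w k u x) ⊓ w x v) ⊔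
            maxWalkWidth w 0 u v := by
          simp only [maxMinBF, ih, maxWalkWidth_zero]; rfl
      _ = (⨆ k ∈ Finset.range (t + 1), ⨆ x, maxWalkWidth w k u x ⊓ w x v) ⊔
            maxWalkWidth w 0 u v := by
          simp only [iSup₂_inf_eq]
          rw [iSup_comm]
          exact congrArg (· ⊔ _) (iSup_congr fun k => iSup_comm)
      _ = ⨆ k ∈ Finset.range (t + 2), maxWalkWidth w k u v := by
          simp only [← maxWalkWidth_succ]
          rw [Finset.iSup_range_succ' _ (t + 1), sup_comm]
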